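/- For any ε > 0 and any positive integer r, there exist a graph G with Δ(G) = r and a tree T, both on n vertices for some n, such that 3·Δ(G) + ℓ(T) - 2 < (1+ε)·n but G and T do not pack. -/

import Mathlib

open SimpleGraph
open scoped Classical

/-- Degree of a vertex. -/
noncomputable def deg {V : Type} (G : SimpleGraph V) (v : V) : ℕ := Nat.card (G.neighborSet v)

/-- Number of vertices of degree exactly 1 (leaves for trees/forests). -/
noncomputable def numLeaves {V : Type} (G : SimpleGraph V) : ℕ := Nat.card {v : V // deg G v = 1}

/-- Number of connected components containing at least one edge. -/
noncomputable def numEdgeComps {V : Type} (G : SimpleGraph V) : ℕ :=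
  Nat.card {c : G.ConnectedComponent // ∃ v w : V, G.Adj v w ∧ G.connectedComponentMk v = c}

/-- Maximum degree. -/
noncomputable def maxDeg {V : Type} (G : SimpleGraph V) : ℕ := sSup (Set.range (deg G))

/-- `G` and `H` pack: a bijection sends edges of `H` to non-edges of `G`. -/
def Packs {V W : Type} (G : SimpleGraph V) (H : SimpleGraph W) : Prop :=
  ∃ f : W ≃ V, ∀ x y : W, H.Adj x y → ¬ G.Adj (f x) (f y)

/-- `G` contains a copy of `H` as a subgraph. -/
def ContainsCopy {V W : Type} (G : SimpleGraph V) (H : SimpleGraph W) : Prop :=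
  ∃ f : W ↪ V, ∀ x y : W, H.Adj x y → G.Adj (f x) (f y)

/-- `G` realizes the degree sequence `π`. -/
def IsRealization {n : ℕ} (G : SimpleGraph (Fin n)) (π : Fin n → ℕ) : Prop :=
  ∀ i, deg G i = π i

/-- `π` is a graphic sequence. -/
def Graphic {n : ℕ} (π : Fin n → ℕ) : Prop :=
  ∃ G : SimpleGraph (Fin n), IsRealization G π

/-- `π` is potentially `H`-graphic. -/
def PotentiallyGraphic {n : ℕ} {W : Type} (π : Fin n → ℕ) (H : SimpleGraph W) : Prop :=
  ∃ G : SimpleGraph (Fin n), IsRealization G π ∧ ContainsCopy G H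

/-- The complementary sequence `π̄ = (n-1-d_n, …, n-1-d_1)`. -/
def compSeq {n : ℕ} (π : Fin n → ℕ) : Fin n → ℕ := fun i => n - 1 - π i.rev

/-- The potential-Ramsey number. -/
noncomputable def rpot {W₁ W₂ : Type} (H₁ : SimpleGraph W₁) (H₂ : SimpleGraph W₂) : ℕ :=
  sInf {N : ℕ | ∀ π : Fin N → ℕ, Antitone π → Graphic π →
    PotentiallyGraphic π H₁ ∨ PotentiallyGraphic (compSeq π) H₂}

/-- The star `K_{1,t-1}` on `t` vertices, centered at vertex `0`. -/
def starGraph (t : ℕ) : SimpleGraph (Fin t) := SimpleGraph.fromRel (fun i _ => (i : ℕ) = 0)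

/-!
Take `G = m·K_{r+1}` on `n = m(r+1)` vertices and `T` the star on the same vertices. Since `G` is
`r`-regular with `r > 0` it has no isolated vertex, whereas a packing must send the centre of the
star, which is adjacent to everything else, to a vertex with no `G`-neighbour. The star has
`n - 1` leaves, so the inequality reduces to `3r - 2 < εn`, which holds as soon as `m > 3r/ε`.
-/

lemma deg_eq_degree {V : Type} (G : SimpleGraph V) (v : V) [Fintype (G.neighborSet v)] :
    deg G v = G.degree v := by
  rw [deg, Nat.card_eq_fintype_card, card_neighborSet_eq_degree]

lemma deg_comap_equiv {V W : Type} (G : SimpleGraph W) (e : V ≃ W) (v : V) :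
    deg (G.comap e) v = deg G (e v) :=
  Nat.card_congr <| e.subtypeEquiv fun _ => Iff.rfl

lemma exists_adj_of_deg_pos {V : Type} {G : SimpleGraph V} {v : V} (h : 0 < deg G v) :
    ∃ w, G.Adj v w := by
  obtain ⟨⟨w, hw⟩⟩ := (Nat.card_pos_iff.mp h).1
  exact ⟨w, hw⟩

lemma maxDeg_eq_of_forall_deg_eq {V : Type} [Nonempty V] {G : SimpleGraph V} {r : ℕ}
    (h : ∀ v, deg G v = r) : maxDeg G = r := by
  rw [maxDeg, show deg G = fun _ => r from funext h, Set.range_const, csSup_singleton]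

lemma numLeaves_le_card {V : Type} [Finite V] (G : SimpleGraph V) : numLeaves G ≤ Nat.card V :=
  Finite.card_subtype_le _

theorem SimpleGraph.IsRegularOfDegree.boxProd {α β : Type} [Fintype α] [Fintype β]
    {G : SimpleGraph α} {H : SimpleGraph β} [DecidableRel G.Adj] [DecidableRel H.Adj]
    {d e : ℕ} (hG : G.IsRegularOfDegree d) (hH : H.IsRegularOfDegree e) :
    (G □ H).IsRegularOfDegree (d + e) := fun x => by
  rw [degree_boxProd, hG.degree_eq, hH.degree_eq]

lemma exists_forall_deg_eq (m r : ℕ) :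
    ∃ G : SimpleGraph (Fin (m * (r + 1))), ∀ v, deg G v = r := by
  have hreg :
      ((⊥ : SimpleGraph (Fin m)) □ (⊤ : SimpleGraph (Fin (r + 1)))).IsRegularOfDegree r := by
    simpa using IsRegularOfDegree.bot.boxProd (IsRegularOfDegree.top (V := Fin (r + 1)))
  refine ⟨(⊥ □ ⊤).comap finProdFinEquiv.symm, fun v => ?_⟩
  rw [deg_comap_equiv, deg_eq_degree, hreg.degree_eq]

lemma not_packs_of_isUniversal {V W : Type} {G : SimpleGraph V} {T : SimpleGraph W} {c : W}
    (hc : T.IsUniversal c) (hG : ∀ v, ∃ w, G.Adj v w) : ¬ Packs G T := by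
  rintro ⟨f, hf⟩
  obtain ⟨w, hw⟩ := hG (f c)
  have hne : c ≠ f.symm w := fun h => G.irrefl (by rwa [h, f.apply_symm_apply] at hw)
  exact hf c (f.symm w) (hc hne) (by rwa [f.apply_symm_apply])

/-- Asymptotic tightness: for any ε > 0 and r ≥ 1 there are G with Δ(G) = r and a tree T
on n vertices with 3Δ(G) + ℓ(T) - 2 < (1+ε)n, but G and T do not pack. -/
theorem asymptotic_tightness (ε : ℝ) (hε : 0 < ε) (r : ℕ) (hr : 0 < r) :
    ∃ (n : ℕ) (G T : SimpleGraph (Fin n)), maxDeg G = r ∧ T.IsTree ∧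
      3 * (maxDeg G : ℝ) + numLeaves T - 2 < (1 + ε) * n ∧ ¬ Packs G T := by
  obtain ⟨m, hm⟩ := exists_nat_gt (3 * r / ε)
  obtain ⟨G, hG⟩ := exists_forall_deg_eq m r
  have hpos : 0 < m := Nat.cast_pos.mp ((div_nonneg (by positivity) hε.le).trans_lt hm)
  have : NeZero (m * (r + 1)) := ⟨(Nat.mul_pos hpos r.succ_pos).ne'⟩
  have hmaxDeg : maxDeg G = r := maxDeg_eq_of_forall_deg_eq hG
  refine ⟨_, G, SimpleGraph.starGraph 0, hmaxDeg, isTree_starGraph 0, ?_,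
    not_packs_of_isUniversal isUniversal_starGraph_self
      fun v => exists_adj_of_deg_pos (by rw [hG]; exact hr)⟩
  have hleaves :
      (numLeaves (SimpleGraph.starGraph (0 : Fin (m * (r + 1)))) : ℝ) ≤ m * (r + 1) := by
    exact_mod_cast (numLeaves_le_card _).trans_eq (Nat.card_fin _)
  have h3r : 3 * (r : ℝ) < ε * (m * (r + 1)) :=
    calc 3 * (r : ℝ) < ε * m := by rw [div_lt_iff₀ hε] at hm; linarith
      _ ≤ ε * (m * (r + 1)) := by gcongr; exact le_mul_of_one_le_right m.cast_nonneg (by simp)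
  rw [hmaxDeg]
  push_cast
  linarith
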